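/- Let G be a graph with a perfect matching and let S(G) be its complete subdivision. Then χ_pcf(S(G)) ≤ max{5, χ(G)}. -/
import Mathlib

open SimpleGraph

/-- A proper conflict-free coloring: proper, and every non-isolated vertex has a color
appearing exactly once in its open neighborhood. -/
def IsPCFColoring {V : Type*} (G : SimpleGraph V) {n : ℕ} (c : V → Fin n) : Prop :=
  (∀ u v, G.Adj u v → c u ≠ c v) ∧
  ∀ v : V, (G.neighborSet v).Nonempty →
    ∃ k : Fin n, ∃! u, u ∈ G.neighborSet v ∧ c u = k

/-- The PCF chromatic number. -/
noncomputable def pcfChromNum {V : Type*} (G : SimpleGraph V) : ℕ :=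
  sInf {n | ∃ c : V → Fin n, IsPCFColoring G c}

/-- The chromatic number (as a natural number). -/
noncomputable def chromNum {V : Type*} (G : SimpleGraph V) : ℕ :=
  sInf {n | G.Colorable n}
/-- The complete subdivision of a graph: every edge subdivided exactly once. -/
def subdiv {V : Type*} (G : SimpleGraph V) : SimpleGraph (V ⊕ G.edgeSet) :=
  SimpleGraph.fromRel (fun a b => match a, b with
    | Sum.inl v, Sum.inr e => v ∈ (e : Sym2 V)
    | _, _ => False)

lemma exists_avoid {n : ℕ} (hn : 5 ≤ n) (a b c d : Fin n) :
    ∃ k : Fin n, k ≠ a ∧ k ≠ b ∧ k ≠ c ∧ k ≠ d := by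
  by_contra h
  push_neg at h
  have hsub : (Finset.univ : Finset (Fin n)) ⊆ {a, b, c, d} := by
    intro k _
    simp only [Finset.mem_insert, Finset.mem_singleton]
    by_cases h1 : k = a
    · exact Or.inl h1
    by_cases h2 : k = b
    · exact Or.inr (Or.inl h2)
    by_cases h3 : k = c
    · exact Or.inr (Or.inr (Or.inl h3))
    · exact Or.inr (Or.inr (Or.inr (h k h1 h2 h3)))
  have hc : n ≤ 4 := by
    calc n = (Finset.univ : Finset (Fin n)).card := by simp
    _ ≤ ({a, b, c, d} : Finset (Fin n)).card := Finset.card_le_card hsub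
    _ ≤ 4 := by
      apply le_trans (Finset.card_insert_le _ _)
      have := Finset.card_insert_le b ({c, d} : Finset (Fin n))
      have := Finset.card_insert_le c ({d} : Finset (Fin n))
      simp_all
      omega
  omega

lemma subdiv_adj_iff {V : Type*} (G : SimpleGraph V) (a b : V ⊕ G.edgeSet) :
    (subdiv G).Adj a b ↔
      (∃ v e, a = Sum.inl v ∧ b = Sum.inr e ∧ v ∈ (e : Sym2 V)) ∨
      (∃ v e, b = Sum.inl v ∧ a = Sum.inr e ∧ v ∈ (e : Sym2 V)) := by
  constructor
  · intro h
    rw [subdiv, fromRel_adj] at h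
    obtain ⟨hne, h | h⟩ := h
    · rcases a with v | e <;> rcases b with w | f
      · exact h.elim
      · exact Or.inl ⟨v, f, rfl, rfl, h⟩
      · exact h.elim
      · exact h.elim
    · rcases a with v | e <;> rcases b with w | f
      · exact h.elim
      · exact h.elim
      · exact Or.inr ⟨w, e, rfl, rfl, h⟩
      · exact h.elim
  · rintro (⟨v, e, rfl, rfl, hv⟩ | ⟨v, e, rfl, rfl, hv⟩) <;> rw [subdiv, fromRel_adj]
    · exact ⟨by simp, Or.inl hv⟩
    · exact ⟨by simp, Or.inr hv⟩

theorem pcf_subdiv_perfectMatching {V : Type*} [Fintype V] (G : SimpleGraph V)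
    (hM : ∃ M : G.Subgraph, M.IsPerfectMatching) :
    pcfChromNum (subdiv G) ≤ max 5 (chromNum G) := by
  classical
  obtain ⟨M, hM⟩ := hM
  set n := max 5 (chromNum G) with hn
  have hn5 : 5 ≤ n := le_max_left _ _
  -- obtain a proper coloring of G with n colors
  have hne : {m | G.Colorable m}.Nonempty := ⟨Fintype.card V, G.colorable_of_fintype⟩
  have hcol : G.Colorable (chromNum G) := Nat.sInf_mem hne
  obtain ⟨c⟩ := hcol.mono (le_max_right 5 (chromNum G))
  -- matching partner function
  have hmatch : ∀ v : V, ∃! w, M.Adj v w := fun v => hM.1 (hM.2 v)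
  choose m hm hmu using hmatch
  have hmm : ∀ v, m (m v) = v := fun v => (hmu (m v) v (hm v).symm).symm
  -- colors for matching edges: avoid the colors of all endpoints
  have hmc : ∀ e : Sym2 V, ∃ k : Fin n, ∀ x ∈ e, k ≠ c x := by
    intro e
    induction e using Sym2.ind with
    | _ u v =>
      obtain ⟨k, h1, h2, -, -⟩ := exists_avoid hn5 (c u) (c v) (c u) (c u)
      exact ⟨k, fun x hx => by rcases Sym2.mem_iff.mp hx with h | h <;> subst h <;> assumption⟩
  choose mc hmcspec using hmc
  set F : V → Fin n := fun v => mc s(v, m v) with hF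
  -- colors for non-matching edges: avoid endpoint colors and matching-edge colors
  have hoc : ∀ e : Sym2 V, ∃ k : Fin n, ∀ x ∈ e, k ≠ c x ∧ k ≠ F x := by
    intro e
    induction e using Sym2.ind with
    | _ u v =>
      obtain ⟨k, h1, h2, h3, h4⟩ := exists_avoid hn5 (c u) (c v) (F u) (F v)
      exact ⟨k, fun x hx => by
        rcases Sym2.mem_iff.mp hx with h | h <;> subst h <;> exact ⟨by assumption, by assumption⟩⟩
  choose oc hocspec using hoc
  -- the coloring
  set col : V ⊕ G.edgeSet → Fin n := fun a => match a with
    | Sum.inl v => c v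
    | Sum.inr e => if (e : Sym2 V) ∈ M.edgeSet then mc e else oc e
    with hcoldef
  -- identification of a matching edge through a vertex
  have factB : ∀ (v : V) (e : Sym2 V), e ∈ M.edgeSet → v ∈ e → e = s(v, m v) := by
    intro v e heM hv
    induction e using Sym2.ind with
    | _ a b =>
      rw [SimpleGraph.Subgraph.mem_edgeSet] at heM
      rcases Sym2.mem_iff.mp hv with h | h
      · subst h
        rw [hmu v b heM]
      · subst h
        rw [hmu v a heM.symm, Sym2.eq_swap]
  -- the edge colors avoid the endpoint colors
  have factA : ∀ (e : G.edgeSet) (x : V), x ∈ (e : Sym2 V) → col (Sum.inr e) ≠ c x := by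
    intro e x hx
    simp only [hcoldef]
    split
    · exact hmcspec _ x hx
    · exact (hocspec _ x hx).1
  -- matching edge gets color F v
  have factC : ∀ (v : V) (e : G.edgeSet), (e : Sym2 V) ∈ M.edgeSet → v ∈ (e : Sym2 V) →
      col (Sum.inr e) = F v := by
    intro v e heM hv
    simp only [hcoldef, if_pos heM]
    rw [factB v e heM hv]
  -- non-matching edge avoids F v
  have factD : ∀ (v : V) (e : G.edgeSet), (e : Sym2 V) ∉ M.edgeSet → v ∈ (e : Sym2 V) →
      col (Sum.inr e) ≠ F v := by
    intro v e heM hv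
    simp only [hcoldef, if_neg heM]
    exact (hocspec _ v hv).2
  have hmE : ∀ v : V, s(v, m v) ∈ G.edgeSet := fun v => (hm v).adj_sub
  have hmME : ∀ v : V, s(v, m v) ∈ M.edgeSet := fun v => (hm v)
  refine Nat.sInf_le ⟨col, ?_, ?_⟩
  · -- properness
    intro a b hab
    rcases (subdiv_adj_iff G a b).mp hab with ⟨v, e, rfl, rfl, hv⟩ | ⟨v, e, rfl, rfl, hv⟩
    · exact fun h => factA e v hv h.symm
    · exact factA e v hv
  · -- conflict-free part
    rintro (v | e) _
    · -- original vertex v : use the matching edge color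
      refine ⟨F v, Sum.inr ⟨s(v, m v), hmE v⟩, ⟨?_, ?_⟩, ?_⟩
      · rw [SimpleGraph.mem_neighborSet, subdiv_adj_iff]
        exact Or.inl ⟨v, ⟨s(v, m v), hmE v⟩, rfl, rfl, by simp⟩
      · exact factC v ⟨s(v, m v), hmE v⟩ (hmME v) (by simp)
      · rintro a ⟨ha, hcol⟩
        rw [SimpleGraph.mem_neighborSet, subdiv_adj_iff] at ha
        rcases ha with ⟨w, e, hw, he, hv⟩ | ⟨w, e, hw, he, hv⟩
        · obtain rfl : v = w := by injection hw
          subst he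
          by_cases heM : (e : Sym2 V) ∈ M.edgeSet
          · exact congrArg Sum.inr (Subtype.ext (factB v e heM hv))
          · exact absurd hcol (factD v e heM hv)
        · exact absurd he (by simp)
    · -- subdivision vertex
      obtain ⟨e, he⟩ := e
      induction e using Sym2.ind with
      | _ u v =>
        have hG : G.Adj u v := he
        refine ⟨c u, Sum.inl u, ⟨?_, rfl⟩, ?_⟩
        · rw [SimpleGraph.mem_neighborSet, subdiv_adj_iff]
          exact Or.inr ⟨u, ⟨s(u, v), he⟩, rfl, rfl, by simp⟩
        · rintro a ⟨ha, hcol⟩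
          rw [SimpleGraph.mem_neighborSet, subdiv_adj_iff] at ha
          rcases ha with ⟨w, f, hw, hf, hv⟩ | ⟨w, f, hw, hf, hv⟩
          · exact absurd hw (by simp)
          · obtain rfl : a = Sum.inl w := hw
            have hfe : f = ⟨s(u, v), he⟩ := by
              injection hf with h
              exact h.symm
            subst hfe
            rcases Sym2.mem_iff.mp hv with h | h
            · rw [h]
            · subst h
              exact absurd hcol (c.valid hG).symm
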